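/- arXiv:2506.04578 — 3 statements merged into one kernel-verified Lean document; each statement's English description precedes it below -/
import Mathlib

section
/- Let f be a smooth function of z on [0,∞), let c ≥ 0 and α ∈ (0,1), ε > 0, and suppose |f'(z)| ≤ 2ε(z+c)^α for all z > 0. Then for all z > 0, |f(z) - (1/(z+c))∫₀^z f(z') dz'| ≤ (ε(z+c)^{1+α})/(1+α/2) + |f(0)|. -/
open Real Set MeasureTheory

/-!
Integrating by parts against `t + c`,
`(z + c) f z - ∫₀^z f = c f 0 + ∫₀^z (t + c) f' t`.
The derivative bound makes the last integrand at most `2ε (t + c)^(α+1)` in absolute value,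
whose integral over `[0, z]` is at most `2ε (z + c)^(α+2) / (α + 2)`; dividing by `z + c` gives
the claim, since `c |f 0| ≤ (z + c) |f 0|`.
-/

theorem integral_add_const_mul_deriv {f f' : ℝ → ℝ} {a b : ℝ} (c : ℝ)
    (hf : ∀ x ∈ uIcc a b, HasDerivAt f (f' x) x) (hf' : IntervalIntegrable f' volume a b) :
    ∫ t in a..b, (t + c) * f' t = (b + c) * f b - (a + c) * f a - ∫ t in a..b, f t := by
  simpa only [one_mul] using intervalIntegral.integral_mul_deriv_eq_deriv_mul
    (fun x _ => (hasDerivAt_id' x).add_const c) hf intervalIntegrable_const hf'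

theorem integral_add_const_rpow {r : ℝ} (hr : -1 < r) (a b c : ℝ) :
    ∫ t in a..b, (t + c) ^ r = ((b + c) ^ (r + 1) - (a + c) ^ (r + 1)) / (r + 1) := by
  rw [intervalIntegral.integral_comp_add_right (fun x => x ^ r) c, integral_rpow (Or.inl hr)]

theorem abs_integral_le_of_abs_le_mul_add_const_rpow {g : ℝ → ℝ} {c z r K : ℝ}
    (hc : 0 ≤ c) (hz : 0 ≤ z) (hr : -1 < r) (hK : 0 ≤ K)
    (hg : ∀ t ∈ Ioc 0 z, |g t| ≤ K * (t + c) ^ r) :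
    |∫ t in (0:ℝ)..z, g t| ≤ K * (z + c) ^ (r + 1) / (r + 1) := by
  have hr1 : 0 < r + 1 := by linarith
  have hint : IntervalIntegrable (fun t => K * (t + c) ^ r) volume 0 z := by
    simpa only [sub_self, add_sub_cancel_right] using
      ((intervalIntegral.intervalIntegrable_rpow' hr (a := c) (b := z + c)).comp_add_right c).const_mul K
  calc |∫ t in (0:ℝ)..z, g t| = ‖∫ t in (0:ℝ)..z, g t‖ := rfl
    _ ≤ ∫ t in (0:ℝ)..z, K * (t + c) ^ r :=
        intervalIntegral.norm_integral_le_of_norm_le hz (ae_of_all _ hg) hint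
    _ = K * (((z + c) ^ (r + 1) - c ^ (r + 1)) / (r + 1)) := by
        rw [intervalIntegral.integral_const_mul, integral_add_const_rpow hr, zero_add]
    _ ≤ K * (z + c) ^ (r + 1) / (r + 1) := by
        rw [mul_div_assoc]
        gcongr
        linarith [rpow_nonneg hc (r + 1)]

/-- Lemma 6.6 (tl2) of the paper: if `|f'(z)| ≤ 2ε(z+c)^α` on `(0,∞)`, then
`|f(z) - (1/(z+c))∫₀^z f| ≤ ε(z+c)^{1+α}/(1+α/2) + |f(0)|` for `z > 0`. -/
theorem average_deviation_bound
    (f f' : ℝ → ℝ) (c ε α : ℝ)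
    (hc : 0 ≤ c) (hα : α ∈ Set.Ioo (0:ℝ) 1) (hε : 0 < ε)
    (hderiv : ∀ z ∈ Set.Ici (0:ℝ), HasDerivAt f (f' z) z)
    (hcont : ContinuousOn f' (Set.Ici (0:ℝ)))
    (hbound : ∀ z > (0:ℝ), |f' z| ≤ 2 * ε * (z + c) ^ α) :
    ∀ z > (0:ℝ),
      |f z - (1 / (z + c)) * ∫ t in (0:ℝ)..z, f t| ≤
        ε * (z + c) ^ (1 + α) / (1 + α / 2) + |f 0| := by
  intro z hz
  have hzc : 0 < z + c := by linarith
  have hsub : uIcc 0 z ⊆ Ici 0 := by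
    rw [uIcc_of_le hz.le]
    exact Icc_subset_Ici_self
  have hparts := integral_add_const_mul_deriv c (fun x hx => hderiv x (hsub hx))
    ((hcont.mono hsub).intervalIntegrable)
  have hweighted : |∫ t in (0:ℝ)..z, (t + c) * f' t| ≤
      2 * ε * (z + c) ^ (α + 1 + 1) / (α + 1 + 1) := by
    refine abs_integral_le_of_abs_le_mul_add_const_rpow hc hz.le (by linarith [hα.1])
      (by positivity) fun t ht => ?_
    have htc : 0 < t + c := by linarith [ht.1]
    rw [abs_mul, abs_of_pos htc, rpow_add_one htc.ne']
    nlinarith [hbound t ht.1]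
  have hrepr : f z - 1 / (z + c) * ∫ t in (0:ℝ)..z, f t =
      (c * f 0 + ∫ t in (0:ℝ)..z, (t + c) * f' t) / (z + c) := by
    rw [hparts]
    field_simp
    ring
  rw [hrepr, abs_div, abs_of_pos hzc, div_le_iff₀ hzc]
  calc |c * f 0 + ∫ t in (0:ℝ)..z, (t + c) * f' t|
      ≤ c * |f 0| + |∫ t in (0:ℝ)..z, (t + c) * f' t| := by
        simpa only [abs_mul, abs_of_nonneg hc] using abs_add_le (c * f 0) _
    _ ≤ (z + c) * |f 0| + 2 * ε * (z + c) ^ (α + 1 + 1) / (α + 1 + 1) :=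
        add_le_add (mul_le_mul_of_nonneg_right (by linarith) (abs_nonneg _)) hweighted
    _ = _ := by
        rw [rpow_add_one hzc.ne', add_comm α 1]
        field_simp
        ring
end

section
/- Let u : (0,X]×(0,∞) → ℝ be smooth and consider the vector fields ∇_ξ = ∂_x − (G(x,z)/u(x,z))∂_z with G(x,z) = ∫₀^z ∂_x u(x,z') dz', and ∇_ψ = (1/u)∂_z, defined where u > 0. Then the commutator [∇_ξ, ∇_ψ] vanishes: for every smooth function f, ∇_ξ(∇_ψ f) = ∇_ψ(∇_ξ f). -/
open Real

/-- Partial derivative in the first (x) variable. -/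
noncomputable def pdx (f : ℝ → ℝ → ℝ) (x z : ℝ) : ℝ := deriv (fun t => f t z) x

/-- Partial derivative in the second (z) variable. -/
noncomputable def pdz (f : ℝ → ℝ → ℝ) (x z : ℝ) : ℝ := deriv (fun t => f x t) z

section aux

variable {H : ℝ × ℝ → ℝ}

lemma aux_hasDerivAt_fst (h : ContDiff ℝ (⊤ : ℕ∞) H) (x z : ℝ) :
    HasDerivAt (fun t => H (t, z)) (fderiv ℝ H (x, z) (1, 0)) x := by
  have h1 : HasFDerivAt H (fderiv ℝ H (x, z)) (x, z) :=
    (h.differentiable (by simp) (x, z)).hasFDerivAt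
  have h2 : HasDerivAt (fun t : ℝ => (t, z)) ((1 : ℝ), (0 : ℝ)) x :=
    (hasDerivAt_id x).prodMk (hasDerivAt_const x z)
  exact h1.comp_hasDerivAt x h2

lemma aux_hasDerivAt_snd (h : ContDiff ℝ (⊤ : ℕ∞) H) (x z : ℝ) :
    HasDerivAt (fun t => H (x, t)) (fderiv ℝ H (x, z) (0, 1)) z := by
  have h1 : HasFDerivAt H (fderiv ℝ H (x, z)) (x, z) :=
    (h.differentiable (by simp) (x, z)).hasFDerivAt
  have h2 : HasDerivAt (fun t : ℝ => (x, t)) ((0 : ℝ), (1 : ℝ)) z :=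
    (hasDerivAt_const z x).prodMk (hasDerivAt_id z)
  exact h1.comp_hasDerivAt z h2

lemma aux_smooth_apply (h : ContDiff ℝ (⊤ : ℕ∞) H) (v : ℝ × ℝ) :
    ContDiff ℝ (⊤ : ℕ∞) (fun p => fderiv ℝ H p v) :=
  (h.fderiv_right (by simp)).clm_apply contDiff_const

lemma aux_fderiv_apply (h : ContDiff ℝ (⊤ : ℕ∞) H) (p : ℝ × ℝ) (v w : ℝ × ℝ) :
    fderiv ℝ (fun q => fderiv ℝ H q v) p w = fderiv ℝ (fderiv ℝ H) p w v := by
  have hd : DifferentiableAt ℝ (fderiv ℝ H) p :=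
    (h.fderiv_right (m := (⊤ : ℕ∞)) ((by simp))).differentiable (by simp) p
  rw [fderiv_clm_apply hd (differentiableAt_const v)]
  simp

lemma aux_clairaut (h : ContDiff ℝ (⊤ : ℕ∞) H) (p : ℝ × ℝ) (v w : ℝ × ℝ) :
    fderiv ℝ (fun q => fderiv ℝ H q v) p w = fderiv ℝ (fun q => fderiv ℝ H q w) p v := by
  rw [aux_fderiv_apply h p v w, aux_fderiv_apply h p w v]
  exact (h.contDiffAt.isSymmSndFDerivAt (by rw [minSmoothness_of_isRCLikeNormedField]; exact WithTop.coe_le_coe.mpr (le_top : (2 : ℕ∞) ≤ ⊤))) w v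

end aux

/-- The vector field `∇_ξ f = ∂_x f − ((∫₀^z ∂_x u dz')/u) ∂_z f`. -/
noncomputable def Dxi (u f : ℝ → ℝ → ℝ) (x z : ℝ) : ℝ :=
  pdx f x z - ((∫ t in (0:ℝ)..z, pdx u x t) / u x z) * pdz f x z

/-- The vector field `∇_ψ f = (1/u) ∂_z f`. -/
noncomputable def Dpsi (u f : ℝ → ℝ → ℝ) (x z : ℝ) : ℝ :=
  pdz f x z / u x z

/-- The commutator `[∇_ξ, ∇_ψ]` vanishes (equation (3.1) of the paper). -/
theorem commutator_xi_psi_eq_zero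
    (u f : ℝ → ℝ → ℝ)
    (hu : ContDiff ℝ (⊤ : ℕ∞) (fun p : ℝ × ℝ => u p.1 p.2))
    (hf : ContDiff ℝ (⊤ : ℕ∞) (fun p : ℝ × ℝ => f p.1 p.2))
    (hupos : ∀ x z, 0 < u x z) :
    ∀ x z, Dxi u (Dpsi u f) x z = Dpsi u (Dxi u f) x z := by
  intro x z
  set F : ℝ × ℝ → ℝ := fun p => f p.1 p.2 with hF
  set U : ℝ × ℝ → ℝ := fun p => u p.1 p.2 with hU
  set A : ℝ × ℝ → ℝ := fun p => fderiv ℝ F p (1, 0) with hA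
  set B : ℝ × ℝ → ℝ := fun p => fderiv ℝ F p (0, 1) with hB
  have hAc : ContDiff ℝ (⊤ : ℕ∞) A := aux_smooth_apply hf _
  have hBc : ContDiff ℝ (⊤ : ℕ∞) B := aux_smooth_apply hf _
  -- pdx f = A, pdz f = B pointwise
  have hpdxf : ∀ a b, pdx f a b = A (a, b) := fun a b =>
    (aux_hasDerivAt_fst hf a b).deriv
  have hpdzf : ∀ a b, pdz f a b = B (a, b) := fun a b =>
    (aux_hasDerivAt_snd hf a b).deriv
  have hpdxu : ∀ a b, pdx u a b = fderiv ℝ U (a, b) (1, 0) := fun a b =>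
    (aux_hasDerivAt_fst hu a b).deriv
  -- values at point
  have upos := hupos x z
  have une : U (x, z) ≠ 0 := ne_of_gt upos
  -- FTC : derivative in z of the integral G
  have hcontx : Continuous (fun t : ℝ => fderiv ℝ U (x, t) (1, 0)) := by
    have := (aux_smooth_apply hu ((1 : ℝ), (0 : ℝ))).continuous
    exact this.comp (by continuity)
  have hG : HasDerivAt (fun s => ∫ t in (0:ℝ)..s, pdx u x t)
      (fderiv ℝ U (x, z) (1, 0)) z := by
    have heq : (fun t : ℝ => pdx u x t) = fun t => fderiv ℝ U (x, t) (1, 0) := by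
      funext t; exact hpdxu x t
    rw [heq]
    exact intervalIntegral.integral_hasDerivAt_right
      (hcontx.intervalIntegrable _ _)
      hcontx.stronglyMeasurable.stronglyMeasurableAtFilter
      hcontx.continuousAt
  set G : ℝ := ∫ t in (0:ℝ)..z, pdx u x t with hGdef
  -- derivatives of basic quantities
  have hBx : HasDerivAt (fun t => B (t, z)) (fderiv ℝ B (x, z) (1, 0)) x :=
    aux_hasDerivAt_fst hBc x z
  have hBz : HasDerivAt (fun t => B (x, t)) (fderiv ℝ B (x, z) (0, 1)) z :=
    aux_hasDerivAt_snd hBc x z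
  have hAz : HasDerivAt (fun t => A (x, t)) (fderiv ℝ A (x, z) (0, 1)) z :=
    aux_hasDerivAt_snd hAc x z
  have hUx : HasDerivAt (fun t => U (t, z)) (fderiv ℝ U (x, z) (1, 0)) x :=
    aux_hasDerivAt_fst hu x z
  have hUz : HasDerivAt (fun t => U (x, t)) (fderiv ℝ U (x, z) (0, 1)) z :=
    aux_hasDerivAt_snd hu x z
  -- Clairaut
  have hclair : fderiv ℝ B (x, z) (1, 0) = fderiv ℝ A (x, z) (0, 1) := by
    simpa [hA, hB] using aux_clairaut hf (x, z) ((0:ℝ),(1:ℝ)) ((1:ℝ),(0:ℝ))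
  -- abbreviations
  set b := B (x, z)
  set u0 := U (x, z)
  set b1 := fderiv ℝ B (x, z) (1, 0)
  set b2 := fderiv ℝ B (x, z) (0, 1)
  set a2 := fderiv ℝ A (x, z) (0, 1)
  set u1 := fderiv ℝ U (x, z) (1, 0)
  set u2 := fderiv ℝ U (x, z) (0, 1)
  -- compute pdx (Dpsi u f) x z
  have h1 : pdx (Dpsi u f) x z = (b1 * u0 - b * u1) / u0 ^ 2 := by
    have : HasDerivAt (fun t => Dpsi u f t z) ((b1 * u0 - b * u1) / u0 ^ 2) x := by
      have := hBx.div hUx une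
      refine HasDerivAt.congr_of_eventuallyEq this ?_
      filter_upwards with t
      simp [Dpsi, hpdzf, hU]
    exact this.deriv
  -- compute pdz (Dpsi u f) x z
  have h2 : pdz (Dpsi u f) x z = (b2 * u0 - b * u2) / u0 ^ 2 := by
    have : HasDerivAt (fun t => Dpsi u f x t) ((b2 * u0 - b * u2) / u0 ^ 2) z := by
      have := hBz.div hUz une
      refine HasDerivAt.congr_of_eventuallyEq this ?_
      filter_upwards with t
      simp [Dpsi, hpdzf, hU]
    exact this.deriv
  -- compute pdz (Dxi u f) x z
  have h3 : pdz (Dxi u f) x z =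
      a2 - ((u1 * u0 - G * u2) / u0 ^ 2 * b + G / u0 * b2) := by
    have hGz : HasDerivAt (fun t : ℝ => ∫ s in (0:ℝ)..t, pdx u x s) u1 z := hG
    have hq : HasDerivAt (fun t => (∫ s in (0:ℝ)..t, pdx u x s) / U (x, t))
        ((u1 * u0 - G * u2) / u0 ^ 2) z := hGz.div hUz une
    have : HasDerivAt (fun t => Dxi u f x t)
        (a2 - ((u1 * u0 - G * u2) / u0 ^ 2 * b + G / u0 * b2)) z := by
      refine HasDerivAt.congr_of_eventuallyEq (hAz.sub (hq.mul hBz)) ?_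
      filter_upwards with t
      simp [Dxi, hpdxf, hpdzf, hU]
    exact this.deriv
  -- put everything together
  have hLHS : Dxi u (Dpsi u f) x z =
      (b1 * u0 - b * u1) / u0 ^ 2 - G / u0 * ((b2 * u0 - b * u2) / u0 ^ 2) := by
    have hux : u x z = u0 := rfl
    rw [Dxi, h1, h2, hux]
  have hRHS : Dpsi u (Dxi u f) x z =
      (a2 - ((u1 * u0 - G * u2) / u0 ^ 2 * b + G / u0 * b2)) / u0 := by
    rw [Dpsi, h3]
  rw [hLHS, hRHS, hclair]
  field_simp
  ring
end

section
/- (Exponential barrier for large z under P₂-type operator.) Let μ > 0 be small and define φ(x,z) = e^{−μz²/(x+1)}. Suppose coefficients satisfy |b̃(x,y,z)| ≤ C, 0 < u_n/u_{n-1}² ≤ C', |(−∂_z u_n)/u_{n-1}² + u_n ∂_z u_{n-1}/u_{n-1}³| ≤ C''. Then there exists N > 0 (depending only on μ, C, C', C'') such that for all z > N, x ∈ (0,X], the operator P₁φ = ∂_xφ − b̃∂_zφ − (u_n/u_{n-1}²)∂_z²φ + ((−∂_z u_n)/u_{n-1}² + u_n∂_z u_{n-1}/u_{n-1}³)∂_zφ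 satisfies P₁φ ≥ (1/2)·(z²/(x+1)²)·μ·φ > 0, provided μ ≤ μ₀(C'). -/
open Real

/-- Partial derivative of a three-variable function in the third (z) variable. -/
noncomputable def pd3 (f : ℝ → ℝ → ℝ → ℝ) (x y z : ℝ) : ℝ := deriv (fun t => f x y t) z

/-- The exponential barrier `φ(x,z) = e^{−μz²/(x+1)}`. -/
noncomputable def phiB (μ x z : ℝ) : ℝ := Real.exp (-μ * z ^ 2 / (x + 1))

/-- The operator `P₁` of Lemma 6.5 applied to the barrier `φ`:
`P₁φ = ∂_xφ − b̃∂_zφ − (uₙ/u₁²)∂_z²φ + ((−∂_z uₙ)/u₁² + uₙ∂_z u₁/u₁³)∂_zφ`. -/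
noncomputable def P1phi (bt un u1 : ℝ → ℝ → ℝ → ℝ) (μ x y z : ℝ) : ℝ :=
  pdx (phiB μ) x z
    - bt x y z * pdz (phiB μ) x z
    - (un x y z / (u1 x y z) ^ 2) * pdz (fun x' z' => pdz (phiB μ) x' z') x z
    + ((-(pd3 un x y z)) / (u1 x y z) ^ 2
        + un x y z * pd3 u1 x y z / (u1 x y z) ^ 3) * pdz (phiB μ) x z

/- Writing `s = z/(x+1)`, the derivatives of `φ` are `φ` times polynomials in `s` and `1/(x+1)`, and
`P₁φ/φ = μs² + 2μs(b̃ - a) - q(4μ²s² - 2μ/(x+1))` with `q = uₙ/u₁²` and `a` the drift coefficient.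
Once `4qμ ≤ 1/4` the diffusion term costs at most a quarter of `μs²` (its `2μ/(x+1)` part has the
good sign), and the bounded drift terms are linear in `s`, so they cost another quarter once
`s ≥ 8(C + C'')`; since `x ≤ X`, this holds for all large `z`. -/

theorem hasDerivAt_phiB_z (μ x z : ℝ) :
    HasDerivAt (phiB μ x) (-(2 * μ * (z / (x + 1))) * phiB μ x z) z := by
  refine (((hasDerivAt_pow 2 z).const_mul (-μ)).div_const (x + 1)).exp.congr_deriv ?_
  rw [phiB]
  push_cast
  ring

theorem hasDerivAt_phiB_x (μ x z : ℝ) (hx : x + 1 ≠ 0) :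
    HasDerivAt (fun t => phiB μ t z) (μ * (z / (x + 1)) ^ 2 * phiB μ x z) x := by
  have hquot := (hasDerivAt_const x (-μ * z ^ 2)).fun_div ((hasDerivAt_id' x).add_const 1) hx
  refine hquot.exp.congr_deriv ?_
  rw [phiB]
  field_simp
  ring

theorem pdz_phiB (μ x z : ℝ) : pdz (phiB μ) x z = -(2 * μ * (z / (x + 1))) * phiB μ x z :=
  (hasDerivAt_phiB_z μ x z).deriv

theorem pdx_phiB (μ x z : ℝ) (hx : x + 1 ≠ 0) :
    pdx (phiB μ) x z = μ * (z / (x + 1)) ^ 2 * phiB μ x z :=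
  (hasDerivAt_phiB_x μ x z hx).deriv

theorem pdz_pdz_phiB (μ x z : ℝ) :
    pdz (fun x' z' => pdz (phiB μ) x' z') x z
      = (4 * μ ^ 2 * (z / (x + 1)) ^ 2 - 2 * μ / (x + 1)) * phiB μ x z := by
  have hlin : HasDerivAt (fun t => -(2 * μ * (t / (x + 1)))) (-(2 * μ / (x + 1))) z :=
    (((hasDerivAt_id' z).div_const (x + 1)).const_mul (2 * μ)).fun_neg.congr_deriv (by ring)
  rw [pdz, funext (pdz_phiB μ x), (hlin.fun_mul (hasDerivAt_phiB_z μ x z)).deriv]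
  ring

/-- `P₁φ` with the coefficients `b̃`, `uₙ/u₁²` and the drift coefficient frozen to `b`, `q`, `a`. -/
theorem pdx_sub_pdz_sub_pdz_pdz_add_pdz_phiB (μ x z b q a : ℝ) (hx : x + 1 ≠ 0) :
    pdx (phiB μ) x z - b * pdz (phiB μ) x z
        - q * pdz (fun x' z' => pdz (phiB μ) x' z') x z + a * pdz (phiB μ) x z
      = (μ * (z / (x + 1)) ^ 2 + 2 * μ * (z / (x + 1)) * (b - a)
          - q * (4 * μ ^ 2 * (z / (x + 1)) ^ 2 - 2 * μ / (x + 1))) * phiB μ x z := by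
  rw [pdx_phiB μ x z hx, pdz_phiB, pdz_pdz_phiB]
  ring

theorem half_mul_sq_le_barrier_bracket {μ s b a q r C C'' : ℝ} (hμ : 0 < μ)
    (hb : |b| ≤ C) (ha : |a| ≤ C'') (hs : 8 * (C + C'') ≤ s) (hq : 0 ≤ q)
    (hqμ : 4 * q * μ ≤ 1 / 4) (hr : 0 ≤ r) :
    1 / 2 * μ * s ^ 2 ≤ μ * s ^ 2 + 2 * μ * s * (b - a) - q * (4 * μ ^ 2 * s ^ 2 - 2 * μ / r) := by
  obtain ⟨hbC, -⟩ := abs_le.mp hb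
  obtain ⟨-, haC⟩ := abs_le.mp ha
  have hμs : 0 ≤ μ * s :=
    mul_nonneg hμ.le (by linarith [(abs_nonneg b).trans hb, (abs_nonneg a).trans ha])
  have hsplit : μ * s ^ 2 + 2 * μ * s * (b - a) - q * (4 * μ ^ 2 * s ^ 2 - 2 * μ / r)
      - 1 / 2 * μ * s ^ 2 = (1 / 4 - 4 * q * μ) * (μ * s ^ 2) + q * (2 * μ / r)
        + 2 * (μ * s) * (C + b) + 2 * (μ * s) * (C'' - a)
        + (μ * s) * (s - 8 * (C + C'')) / 4 := by ring
  have hdiffusion := mul_nonneg (sub_nonneg.mpr hqμ) (mul_nonneg hμ.le (sq_nonneg s))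
  have hcorrection : 0 ≤ q * (2 * μ / r) := by positivity
  have hbdrift := mul_nonneg hμs (by linarith : 0 ≤ C + b)
  have hadrift := mul_nonneg hμs (by linarith : 0 ≤ C'' - a)
  have hlarge := mul_nonneg hμs (sub_nonneg.mpr hs)
  linarith

theorem exponential_barrier_large_z_general
    (X C C' C'' : ℝ) (bt un u1 : ℝ → ℝ → ℝ → ℝ)
    (hb : ∀ x y z, 0 < x → x ≤ X → 0 < z → |bt x y z| ≤ C)
    (hquot_pos : ∀ x y z, 0 < x → x ≤ X → 0 < z →
      0 < un x y z / (u1 x y z) ^ 2)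
    (hquot_le : ∀ x y z, 0 < x → x ≤ X → 0 < z →
      un x y z / (u1 x y z) ^ 2 ≤ C')
    (hcoef : ∀ x y z, 0 < x → x ≤ X → 0 < z →
      |(-(pd3 un x y z)) / (u1 x y z) ^ 2
        + un x y z * pd3 u1 x y z / (u1 x y z) ^ 3| ≤ C'') :
    ∃ μ₀ > (0:ℝ), ∀ μ, 0 < μ → μ ≤ μ₀ →
      ∃ N > (0:ℝ), ∀ x y z, 0 < x → x ≤ X → N < z →
        (1 / 2) * (z ^ 2 / (x + 1) ^ 2) * μ * phiB μ x z ≤ P1phi bt un u1 μ x y z ∧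
        0 < P1phi bt un u1 μ x y z := by
  refine ⟨1 / (16 * max C' 1), by positivity, fun μ hμ hμ₀ =>
    ⟨8 * (|C| + |C''| + 1) * (|X| + 1), by positivity, fun x y z hx hxX hz => ?_⟩⟩
  have hx1 : 0 < x + 1 := by linarith
  have hz0 : 0 < z := lt_trans (by positivity) hz
  have hq0 := (hquot_pos x y z hx hxX hz0).le
  have hs : 8 * (C + C'') ≤ z / (x + 1) := calc
    8 * (C + C'') ≤ 8 * (|C| + |C''| + 1) := by linarith [le_abs_self C, le_abs_self C'']
    _ ≤ z / (|X| + 1) := by rw [le_div_iff₀ (by positivity)]; exact hz.le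
    _ ≤ z / (x + 1) := by gcongr; linarith [le_abs_self X]
  have hqμ : 4 * (un x y z / u1 x y z ^ 2) * μ ≤ 1 / 4 := calc
    4 * (un x y z / u1 x y z ^ 2) * μ ≤ 4 * max C' 1 * (1 / (16 * max C' 1)) := by
      gcongr
      exact (hquot_le x y z hx hxX hz0).trans (le_max_left _ _)
    _ = 1 / 4 := by field_simp; norm_num
  have hφ : 0 < phiB μ x z := exp_pos _
  have hlower : (1 / 2) * (z ^ 2 / (x + 1) ^ 2) * μ * phiB μ x z ≤ P1phi bt un u1 μ x y z := by
    rw [P1phi, pdx_sub_pdz_sub_pdz_pdz_add_pdz_phiB μ x z _ _ _ hx1.ne', ← div_pow]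
    have hbracket := half_mul_sq_le_barrier_bracket hμ (hb x y z hx hxX hz0)
      (hcoef x y z hx hxX hz0) hs hq0 hqμ hx1.le
    calc 1 / 2 * (z / (x + 1)) ^ 2 * μ * phiB μ x z
        = 1 / 2 * μ * (z / (x + 1)) ^ 2 * phiB μ x z := by ring
      _ ≤ _ := mul_le_mul_of_nonneg_right hbracket hφ.le
  exact ⟨hlower, lt_of_lt_of_le (mul_pos (by positivity) hφ) hlower⟩

/-- Lemma 6.5 of the paper: for `μ` small (depending only on `C'`) there is
`N > 0` with `P₁φ ≥ (1/2)(z²/(x+1)²)μφ > 0` for `z > N`, `x ∈ (0,X]`. -/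
theorem exponential_barrier_large_z
    (X C C' C'' : ℝ) (bt un u1 : ℝ → ℝ → ℝ → ℝ)
    (hX : 0 < X)
    (hb : ∀ x y z, 0 < x → x ≤ X → 0 < z → |bt x y z| ≤ C)
    (hquot_pos : ∀ x y z, 0 < x → x ≤ X → 0 < z →
      0 < un x y z / (u1 x y z) ^ 2)
    (hquot_le : ∀ x y z, 0 < x → x ≤ X → 0 < z →
      un x y z / (u1 x y z) ^ 2 ≤ C')
    (hcoef : ∀ x y z, 0 < x → x ≤ X → 0 < z →
      |(-(pd3 un x y z)) / (u1 x y z) ^ 2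
        + un x y z * pd3 u1 x y z / (u1 x y z) ^ 3| ≤ C'') :
    ∃ μ₀ > (0:ℝ), ∀ μ, 0 < μ → μ ≤ μ₀ →
      ∃ N > (0:ℝ), ∀ x y z, 0 < x → x ≤ X → N < z →
        (1 / 2) * (z ^ 2 / (x + 1) ^ 2) * μ * phiB μ x z ≤ P1phi bt un u1 μ x y z ∧
        0 < P1phi bt un u1 μ x y z :=
  exponential_barrier_large_z_general X C C' C'' bt un u1 hb hquot_pos hquot_le hcoef
end
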